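/- Let 0<p<∞ and φ∈𝒢_p with φ(1)=1. Assume φ(t) ∼ t^{n/p} for t>1, i.e. there exist constants 0<c_1≤c_2 with c_1 t^{n/p} ≤ φ(t) ≤ c_2 t^{n/p} for all t>1. Then there exists c>0 such that 𝔈_G ℳ_{φ,p}(ℝ^n)(t) ≤ c · t^{-1/p} for all t>0. -/

import Mathlib

open MeasureTheory Filter Set ENNReal

noncomputable section

abbrev En (n : ℕ) := EuclideanSpace ℝ (Fin n)

/-- The class `𝒢_p`: nondecreasing positive functions on `(0,∞)` such that
`t ↦ φ(t) t^{-n/p}` is nonincreasing. -/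
def GClass (n : ℕ) (p : ℝ) (φ : ℝ → ℝ) : Prop :=
  (∀ t : ℝ, 0 < t → 0 < φ t) ∧
    ∀ t r : ℝ, 0 < t → t ≤ r → φ t ≤ φ r ∧ φ r ≤ φ t * (r / t) ^ ((n : ℝ) / p)

/-- The axis-parallel compact cube centred at `x` with side length `r`. -/
def cube (n : ℕ) (x : En n) (r : ℝ) : Set (En n) := {y | ∀ i, |y i - x i| ≤ r / 2}

/-- The generalised Morrey quasi-norm `‖f | ℳ_{φ,p}(ℝⁿ)‖`. -/
def morreyNorm {F : Type*} [NormedAddCommGroup F] (n : ℕ) (p : ℝ) (φ : ℝ → ℝ)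
    (f : En n → F) : ℝ≥0∞ :=
  ⨆ (x : En n) (r : ℝ) (_ : 0 < r),
    ENNReal.ofReal (φ r) *
      ((volume (cube n x r))⁻¹ *
        ∫⁻ y in cube n x r, ENNReal.ofReal (‖f y‖ ^ p)) ^ (1 / p)

/-- The decreasing rearrangement `f*(t) = inf{σ>0 : |{x : |f(x)|>σ}| ≤ t}`. -/
def rearr {F : Type*} [NormedAddCommGroup F] (n : ℕ) (f : En n → F) (t : ℝ) : ℝ≥0∞ :=
  sInf {σ : ℝ≥0∞ | 0 < σ ∧ volume {x : En n | σ < ENNReal.ofReal ‖f x‖} ≤ ENNReal.ofReal t}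

/-- The growth envelope function of the generalised Morrey space `ℳ_{φ,p}(ℝⁿ)`. -/
def morreyEnvelope (n : ℕ) (p : ℝ) (φ : ℝ → ℝ) (t : ℝ) : ℝ≥0∞ :=
  ⨆ (f : En n → ℝ) (_ : Measurable f) (_ : morreyNorm n p φ f ≤ 1), rearr n f t

end

/-!
On a cube `Q` of side `r > 1` the Morrey norm bound gives `∫_Q |f|^p ≤ r^n / φ(r)^p ≤ c₁^{-p}`,
uniformly in `r`, hence `‖f‖_p^p ≤ c₁^{-p}`. Chebyshev's inequality then shows that
`|{|f| > c₁⁻¹ t^{-1/p}}| ≤ t`, i.e. `f*(t) ≤ c₁⁻¹ t^{-1/p}`.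
-/

section Cube

variable {n : ℕ}

lemma cube_eq_preimage_pi (x : En n) (r : ℝ) :
    cube n x r = (MeasurableEquiv.toLp 2 (Fin n → ℝ)).symm ⁻¹'
      univ.pi fun i => Icc (x i - r / 2) (x i + r / 2) := by
  ext y
  simp only [cube, mem_ofPred_eq, mem_preimage, mem_univ_pi, mem_Icc, abs_sub_le_iff]
  refine forall_congr' fun i => ?_
  change _ ↔ _ ≤ y i ∧ y i ≤ _
  constructor <;> rintro ⟨h₁, h₂⟩ <;> constructor <;> linarith

lemma volume_cube (x : En n) (r : ℝ) :
    volume (cube n x r) = ENNReal.ofReal r ^ n := by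
  rw [cube_eq_preimage_pi, (EuclideanSpace.volume_preserving_symm_measurableEquiv_toLp
    (Fin n)).measure_preimage (by measurability), volume_pi_pi]
  simp [Real.volume_Icc]

lemma cube_mono (x : En n) {r r' : ℝ} (h : r ≤ r') : cube n x r ⊆ cube n x r' :=
  fun _ hy i => (hy i).trans (by linarith)

lemma iUnion_cube_zero_eq_univ : ⋃ k : ℕ, cube n 0 (k + 2) = univ := by
  refine eq_univ_of_forall fun y => ?_
  obtain ⟨k, hk⟩ := exists_nat_ge (2 * ‖y‖)
  refine mem_iUnion.2 ⟨k, fun i => ?_⟩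
  have hyi : |y i| ≤ ‖y‖ := by simpa using PiLp.norm_apply_le y i
  simp only [PiLp.zero_apply, sub_zero]
  linarith

lemma lintegral_le_of_forall_cube_le {g : En n → ℝ≥0∞} {C : ℝ≥0∞}
    (h : ∀ r, 1 < r → ∫⁻ y in cube n 0 r, g y ≤ C) : ∫⁻ y, g y ≤ C := by
  have hmono : Monotone fun k : ℕ => cube n 0 (k + 2) :=
    fun j k hjk => cube_mono 0 (by gcongr)
  rw [← setLIntegral_univ, ← iUnion_cube_zero_eq_univ,
    setLIntegral_iUnion_of_directed _ hmono.directed_le]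
  exact iSup_le fun k => h _ (by linarith [(k.cast_nonneg : (0 : ℝ) ≤ k)])

end Cube

lemma lintegral_cube_le_of_morreyNorm_le_one {F : Type*} [NormedAddCommGroup F] {n : ℕ}
    {p : ℝ} {φ : ℝ → ℝ} {f : En n → F} (hp : 0 < p) (hf : morreyNorm n p φ f ≤ 1)
    (x : En n) {r : ℝ} (hr : 0 < r) (hφr : 0 < φ r) :
    ∫⁻ y in cube n x r, ENNReal.ofReal (‖f y‖ ^ p) ≤ ENNReal.ofReal (r ^ n / φ r ^ p) := by
  set I := ∫⁻ y in cube n x r, ENNReal.ofReal (‖f y‖ ^ p)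
  set V := volume (cube n x r)
  have hV : V = ENNReal.ofReal r ^ n := volume_cube x r
  have hV0 : V ≠ 0 := by rw [hV]; exact pow_ne_zero _ (ENNReal.ofReal_pos.2 hr).ne'
  have hVtop : V ≠ ⊤ := by rw [hV]; exact pow_ne_top ofReal_ne_top
  have hterm : ENNReal.ofReal (φ r) * (V⁻¹ * I) ^ (1 / p) ≤ 1 :=
    le_trans (by rw [morreyNorm]; exact le_iSup₂_of_le x r (le_iSup_of_le hr le_rfl)) hf
  have hmean : V⁻¹ * I ≤ (ENNReal.ofReal (φ r))⁻¹ ^ p := by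
    have hroot : (V⁻¹ * I) ^ (1 / p) ≤ (ENNReal.ofReal (φ r))⁻¹ := by
      rwa [ENNReal.le_inv_iff_mul_le, mul_comm]
    simpa [← ENNReal.rpow_mul, hp.ne'] using ENNReal.rpow_le_rpow hroot hp.le
  calc I = V * (V⁻¹ * I) := by rw [← mul_assoc, ENNReal.mul_inv_cancel hV0 hVtop, one_mul]
    _ ≤ V * (ENNReal.ofReal (φ r))⁻¹ ^ p := by gcongr
    _ = ENNReal.ofReal (r ^ n / φ r ^ p) := by
      rw [ENNReal.inv_rpow, ENNReal.ofReal_rpow_of_pos hφr, hV, ← ENNReal.ofReal_pow hr.le,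
        div_eq_mul_inv, ENNReal.ofReal_mul (by positivity),
        ENNReal.ofReal_inv_of_pos (Real.rpow_pos_of_pos hφr p)]

lemma pow_div_rpow_le_of_mul_rpow_le {n : ℕ} {p c r a : ℝ} (hp : 0 < p) (hc : 0 < c)
    (hr : 0 < r) (h : c * r ^ ((n : ℝ) / p) ≤ a) : r ^ n / a ^ p ≤ c⁻¹ ^ p := by
  have hpow : c ^ p * r ^ n ≤ a ^ p :=
    calc c ^ p * r ^ n = (c * r ^ ((n : ℝ) / p)) ^ p := by
          rw [Real.mul_rpow hc.le (by positivity), ← Real.rpow_natCast r n,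
            ← Real.rpow_mul hr.le, div_mul_cancel₀ _ hp.ne']
      _ ≤ a ^ p := Real.rpow_le_rpow (by positivity) h hp.le
  calc r ^ n / a ^ p ≤ r ^ n / (c ^ p * r ^ n) := by gcongr
    _ = c⁻¹ ^ p := by rw [Real.inv_rpow hc.le]; field_simp

lemma lintegral_rpow_le_of_morreyNorm_le_one {F : Type*} [NormedAddCommGroup F] {n : ℕ}
    {p c : ℝ} {φ : ℝ → ℝ} {f : En n → F} (hp : 0 < p) (hc : 0 < c)
    (hφ : ∀ r, 1 < r → c * r ^ ((n : ℝ) / p) ≤ φ r) (hf : morreyNorm n p φ f ≤ 1) :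
    ∫⁻ y, ENNReal.ofReal (‖f y‖ ^ p) ≤ ENNReal.ofReal (c⁻¹ ^ p) := by
  refine lintegral_le_of_forall_cube_le fun r hr => ?_
  have hr0 : 0 < r := one_pos.trans hr
  have hφr : 0 < φ r := (by positivity : 0 < c * r ^ ((n : ℝ) / p)).trans_le (hφ r hr)
  exact (lintegral_cube_le_of_morreyNorm_le_one hp hf 0 hr0 hφr).trans
    (ENNReal.ofReal_le_ofReal (pow_div_rpow_le_of_mul_rpow_le hp hc hr0 (hφ r hr)))

lemma measure_lt_norm_le_lintegral_rpow_div {α F : Type*} [MeasurableSpace α]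
    [NormedAddCommGroup F] {μ : Measure α} {f : α → F} (hf : AEStronglyMeasurable f μ)
    {p : ℝ} (hp : 0 < p) {σ : ℝ≥0∞} (hσ : σ ≠ 0) (hσ' : σ ≠ ⊤) :
    μ {x | σ < ENNReal.ofReal ‖f x‖} ≤ (∫⁻ x, ENNReal.ofReal (‖f x‖ ^ p) ∂μ) / σ ^ p := by
  have hsub : {x | σ < ENNReal.ofReal ‖f x‖} ⊆ {x | σ ^ p ≤ ENNReal.ofReal (‖f x‖ ^ p)} :=
    fun x hx => by
      rw [mem_ofPred_eq, ← ENNReal.ofReal_rpow_of_nonneg (norm_nonneg _) hp.le]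
      exact ENNReal.rpow_le_rpow (le_of_lt hx) hp.le
  refine (measure_mono hsub).trans (meas_ge_le_lintegral_div ?_ ?_ ?_)
  · exact ENNReal.measurable_ofReal.comp_aemeasurable (hf.norm.aemeasurable.pow_const p)
  · exact (ENNReal.rpow_pos (pos_iff_ne_zero.2 hσ) hσ').ne'
  · exact ENNReal.rpow_ne_top_of_nonneg hp.le hσ'

theorem statement1_general (n : ℕ) (p : ℝ) (hp : 0 < p) (φ : ℝ → ℝ)
    (hsim : ∃ c₁ c₂ : ℝ, 0 < c₁ ∧ c₁ ≤ c₂ ∧ ∀ t : ℝ, 1 < t →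
      c₁ * t ^ ((n : ℝ) / p) ≤ φ t ∧ φ t ≤ c₂ * t ^ ((n : ℝ) / p)) :
    ∃ c : ℝ, 0 < c ∧ ∀ t : ℝ, 0 < t →
      morreyEnvelope n p φ t ≤ ENNReal.ofReal (c * t ^ (-(1 / p))) := by
  obtain ⟨c₁, _, hc₁, _, hsim⟩ := hsim
  refine ⟨c₁⁻¹, inv_pos.2 hc₁, fun t ht => iSup₂_le fun f hf => iSup_le fun hnorm => ?_⟩
  have hLp := lintegral_rpow_le_of_morreyNorm_le_one hp hc₁ (fun r hr => (hsim r hr).1) hnorm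
  have hs : 0 < c₁⁻¹ * t ^ (-(1 / p)) := by positivity
  have hsp : ENNReal.ofReal (c₁⁻¹ * t ^ (-(1 / p))) ^ p = ENNReal.ofReal (c₁⁻¹ ^ p / t) := by
    rw [ENNReal.ofReal_rpow_of_pos hs, Real.mul_rpow (by positivity) (by positivity),
      ← Real.rpow_mul ht.le, show -(1 / p) * p = -1 by field_simp, Real.rpow_neg_one,
      div_eq_mul_inv]
  refine sInf_le ⟨ENNReal.ofReal_pos.2 hs, ?_⟩
  calc _ ≤ (∫⁻ y, ENNReal.ofReal (‖f y‖ ^ p)) / ENNReal.ofReal (c₁⁻¹ * t ^ (-(1 / p))) ^ p :=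
        measure_lt_norm_le_lintegral_rpow_div hf.aestronglyMeasurable hp
          (ENNReal.ofReal_pos.2 hs).ne' ofReal_ne_top
    _ ≤ ENNReal.ofReal (c₁⁻¹ ^ p) / ENNReal.ofReal (c₁⁻¹ ^ p / t) := by rw [hsp]; gcongr
    _ = ENNReal.ofReal t := by
      rw [← ENNReal.ofReal_div_of_pos (by positivity)]
      congr 1
      field_simp

/-- If `φ(t) ∼ t^{n/p}` for `t>1`, then the growth envelope function of
`ℳ_{φ,p}(ℝⁿ)` is bounded by `c t^{-1/p}` for all `t>0`. -/
theorem statement1 (n : ℕ) (hn : 0 < n) (p : ℝ) (hp : 0 < p) (φ : ℝ → ℝ)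
    (hφ : GClass n p φ) (hφ1 : φ 1 = 1)
    (hsim : ∃ c₁ c₂ : ℝ, 0 < c₁ ∧ c₁ ≤ c₂ ∧ ∀ t : ℝ, 1 < t →
      c₁ * t ^ ((n : ℝ) / p) ≤ φ t ∧ φ t ≤ c₂ * t ^ ((n : ℝ) / p)) :
    ∃ c : ℝ, 0 < c ∧ ∀ t : ℝ, 0 < t →
      morreyEnvelope n p φ t ≤ ENNReal.ofReal (c * t ^ (-(1 / p))) :=
  statement1_general n p hp φ hsim
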